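/- A connected induced subgraph H of a meshed graph G is convex if and only if H is locally-convex, i.e., [x,y] ⊆ V(H) whenever x, y ∈ V(H) and d(x,y) = 2. -/

import Mathlib

namespace PaperS3

variable {V : Type*}

/-- The geodesic interval between `u` and `v`. -/
def interval (G : SimpleGraph V) (u v : V) : Set V :=
  {w | G.dist u w + G.dist w v = G.dist u v}

/-- A set is (geodesically) convex if it contains the interval between any two of its points. -/
def IsConvex (G : SimpleGraph V) (A : Set V) : Prop :=
  ∀ u ∈ A, ∀ v ∈ A, interval G u v ⊆ A

/-- The convex hull: the smallest convex set containing `A`. -/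
def convHull (G : SimpleGraph V) (A : Set V) : Set V :=
  ⋂₀ {C : Set V | IsConvex G C ∧ A ⊆ C}

/-- A halfspace is a convex set with convex complement. -/
def IsHalfspace (G : SimpleGraph V) (H : Set V) : Prop :=
  IsConvex G H ∧ IsConvex G Hᶜ

/-- `A` and `B` are separated by complementary halfspaces. -/
def SepByHalfspaces (G : SimpleGraph V) (A B : Set V) : Prop :=
  ∃ H : Set V, IsHalfspace G H ∧ A ⊆ H ∧ B ⊆ Hᶜ

/-- `G` is an `S3`-graph: every vertex and convex set not containing it are
separated by complementary halfspaces. -/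
def IsS3 (G : SimpleGraph V) : Prop :=
  ∀ (p : V) (A : Set V), IsConvex G A → p ∉ A → SepByHalfspaces G {p} A

/-- The shadow `A/B = {x | conv(B ∪ {x}) ∩ A ≠ ∅}`. -/
def shadow (G : SimpleGraph V) (A B : Set V) : Set V :=
  {x | (convHull G (B ∪ {x}) ∩ A).Nonempty}

/-- A semispace at `x0`: a maximal by inclusion convex set not containing `x0`. -/
def IsSemispaceAt (G : SimpleGraph V) (x0 : V) (S : Set V) : Prop :=
  IsConvex G S ∧ x0 ∉ S ∧
    ∀ S' : Set V, IsConvex G S' → x0 ∉ S' → S ⊆ S' → S' = S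

/-- The vertex `x0` is adjacent to the set `A`. -/
def AdjSet (G : SimpleGraph V) (x0 : V) (A : Set V) : Prop :=
  ∃ a ∈ A, G.Adj x0 a

/-- The imprint of `x0` on `A`. -/
def imprint (G : SimpleGraph V) (x0 : V) (A : Set V) : Set V :=
  {z ∈ A | interval G x0 z ∩ A = {z}}

/-- `K` is an `x0`-proximal set. -/
def IsProximal (G : SimpleGraph V) (x0 : V) (K : Set V) : Prop :=
  imprint G x0 K = K ∧ x0 ∉ convHull G K

/-- The order `K ⪯_{x0} K'`, i.e. `K ⊆ K'/x0`. -/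
def preceq (G : SimpleGraph V) (x0 : V) (K K' : Set V) : Prop :=
  K ⊆ shadow G K' {x0}

/-- `K ∈ Max(Υ_{x0})`: a maximal element of the poset of `x0`-proximal sets. -/
def MaxProximal (G : SimpleGraph V) (x0 : V) (K : Set V) : Prop :=
  IsProximal G x0 K ∧
    ∀ K' : Set V, IsProximal G x0 K' → preceq G x0 K K' → K' = K

/-- `K ∈ Max(Υ*_{x0})`: a maximal element of the poset of `x0`-proximal sets
adjacent to `x0`. -/
def MaxProximalAdj (G : SimpleGraph V) (x0 : V) (K : Set V) : Prop :=
  (IsProximal G x0 K ∧ AdjSet G x0 K) ∧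
    ∀ K' : Set V, IsProximal G x0 K' → AdjSet G x0 K' → preceq G x0 K K' → K' = K

/-- The triangle condition (TC). -/
def TriangleCondition (G : SimpleGraph V) : Prop :=
  ∀ u v w : V, G.Adj v w → G.dist u v = G.dist u w →
    ∃ x : V, G.Adj v x ∧ G.Adj w x ∧ G.dist u x + 1 = G.dist u v

/-- `G` is meshed: the weak quadrangle condition (QC⁻). -/
def Meshed (G : SimpleGraph V) : Prop :=
  ∀ u v w : V, G.dist v w = 2 →
    ∃ x : V, G.Adj v x ∧ G.Adj w x ∧ 2 * G.dist u x ≤ G.dist u v + G.dist u w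

/-- A maximal by inclusion clique. -/
def MaxClique (G : SimpleGraph V) (K : Set V) : Prop :=
  G.IsClique K ∧ ∀ K' : Set V, G.IsClique K' → K ⊆ K' → K' = K

/-- `(x0, K)` is a pointed maximal clique: `K` is a clique, `x0 ∉ K`, and
`K ∪ {x0}` is a maximal clique of `G`. -/
def PointedMaxClique (G : SimpleGraph V) (x0 : V) (K : Set V) : Prop :=
  G.IsClique K ∧ x0 ∉ K ∧ MaxClique G (insert x0 K)

/-- The set `W_=(K')` of vertices equidistant from all vertices of `K'`. -/
def Weq (G : SimpleGraph V) (K' : Set V) : Set V :=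
  {v : V | ∀ y ∈ K', ∀ z ∈ K', G.dist v y = G.dist v z}

/-- The union shadow `x0|K = ⋃_{y ∈ K} x0/y`. -/
def unionShadow (G : SimpleGraph V) (x0 : V) (K : Set V) : Set V :=
  ⋃ y ∈ K, shadow G {x0} {y}

/-- The extended shadow `x0//K = (x0|K) ∪ W_=(K ∪ {x0})`. -/
def extShadow (G : SimpleGraph V) (x0 : V) (K : Set V) : Set V :=
  unionShadow G x0 K ∪ Weq G (insert x0 K)

/-- A set `A` is gated if every vertex outside `A` has a gate in `A`. -/
def IsGated (G : SimpleGraph V) (A : Set V) : Prop :=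
  ∀ x : V, x ∉ A → ∃ x' ∈ A, ∀ y ∈ A, x' ∈ interval G x y

/-- The geodesic convexity of `G` is join-hull commutative. -/
def JHC (G : SimpleGraph V) : Prop :=
  ∀ (A : Set V) (x : V), IsConvex G A →
    convHull G (A ∪ {x}) = ⋃ a ∈ A, interval G x a

end PaperS3

open PaperS3


open SimpleGraph

namespace Stmt17Aux

variable {V : Type*} {G : SimpleGraph V}

lemma adj_dist_le (hconn : G.Connected) {b c : V} (h : G.Adj b c) (a : V) :
    G.dist a c ≤ G.dist a b + 1 := by
  have h1 := hconn.dist_triangle (u := a) (v := b) (w := c)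
  rwa [dist_eq_one_iff_adj.mpr h] at h1

lemma exists_adj_near {W : Type*} {H : SimpleGraph W} (hc : H.Connected) {x y : W} (hne : x ≠ y) :
    ∃ w, H.Adj w y ∧ H.dist x w + 1 = H.dist x y := by
  obtain ⟨p, hp⟩ := hc.exists_walk_length_eq_dist y x
  have hpos : 0 < H.dist x y := hc.pos_dist_of_ne hne
  cases p with
  | nil =>
    rw [SimpleGraph.dist_comm] at hpos; rw [← hp] at hpos; simp at hpos
  | @cons _ b _ h q =>
    refine ⟨b, h.symm, ?_⟩
    have h1 : H.dist x b ≤ q.length := by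
      rw [SimpleGraph.dist_comm]; exact dist_le q
    have h2 : H.dist x y ≤ H.dist x b + 1 := by
      have := hc.dist_triangle (u := x) (v := b) (w := y)
      rwa [dist_eq_one_iff_adj.mpr h.symm] at this
    have h3 : q.length + 1 = H.dist x y := by
      rw [SimpleGraph.dist_comm (u := x) (v := y), ← hp]; simp [Walk.length_cons]
    omega

lemma dist_two_of (hconn : G.Connected) {a b : V} (hne : a ≠ b) (hnadj : ¬ G.Adj a b)
    (hle : G.dist a b ≤ 2) : G.dist a b = 2 := by
  have h0 : G.dist a b ≠ 0 := fun h => hne (hconn.dist_eq_zero_iff.mp h)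
  have h1 : G.dist a b ≠ 1 := by
    intro h; exact hnadj (dist_eq_one_iff_adj.mp h)
  omega

lemma mem_support_dist (hconn : G.Connected) {x y : V} (p : G.Walk x y)
    (hp : p.length = G.dist x y) {z : V} (hz : z ∈ p.support) :
    G.dist x z + G.dist z y = G.dist x y := by
  obtain ⟨q, r, rfl⟩ := Walk.mem_support_iff_exists_append.mp hz
  have h1 := dist_le q
  have h2 := dist_le r
  have h3 := hconn.dist_triangle (u := x) (v := z) (w := y)
  rw [Walk.length_append] at hp
  omega

lemma lift_walk {A : Set V} {x y : V} (p : G.Walk x y) (hx : x ∈ A) (hy : y ∈ A)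
    (hs : ∀ z ∈ p.support, z ∈ A) :
    ∃ q : (G.induce A).Walk ⟨x, hx⟩ ⟨y, hy⟩, q.length = p.length := by
  induction p with
  | nil => exact ⟨Walk.nil, rfl⟩
  | @cons a b c h p ih =>
    have hb : b ∈ A := hs b (by simp)
    obtain ⟨q, hq⟩ := ih hb hy (fun z hz => hs z (by simp [hz]))
    exact ⟨Walk.cons (by exact h) q, by exact congrArg (· + 1) hq⟩

lemma induce_dist_ge {A : Set V} (hA : (G.induce A).Connected) {x y : V} (hx : x ∈ A) (hy : y ∈ A) :
    G.dist x y ≤ (G.induce A).dist ⟨x, hx⟩ ⟨y, hy⟩ := by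
  obtain ⟨q, hq⟩ := hA.exists_walk_length_eq_dist ⟨x, hx⟩ ⟨y, hy⟩
  have := dist_le (q.map (SimpleGraph.Embedding.induce A).toHom)
  rwa [Walk.length_map, hq] at this

lemma mem_interval {u v z : V} : z ∈ interval G u v ↔ G.dist u z + G.dist z v = G.dist u v :=
  Iff.rfl

lemma interval_mono (hconn : G.Connected) {a b c : V} (hb : b ∈ interval G a c) :
    interval G a b ⊆ interval G a c := by
  intro z hz
  rw [mem_interval] at *
  have h3 : G.dist z c ≤ G.dist z b + G.dist b c := hconn.dist_triangle
  have h4 : G.dist a c ≤ G.dist a z + G.dist z c := hconn.dist_triangle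
  omega

lemma interval_self (hconn : G.Connected) (x : V) : interval G x x ⊆ {x} := by
  intro z hz
  rw [mem_interval, SimpleGraph.dist_self] at hz
  have : G.dist x z = 0 := by omega
  simpa using (hconn.dist_eq_zero_iff.mp this).symm

lemma dA_le_of_interval (hconn : G.Connected) {A : Set V} {x y : V} (hx : x ∈ A) (hy : y ∈ A)
    (hI : interval G x y ⊆ A) :
    (G.induce A).dist ⟨x, hx⟩ ⟨y, hy⟩ ≤ G.dist x y := by
  obtain ⟨p, hp⟩ := hconn.exists_walk_length_eq_dist x y
  obtain ⟨q, hq⟩ := lift_walk p hx hy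
    (fun z hz => hI (by exact mem_support_dist hconn p hp hz))
  calc (G.induce A).dist ⟨x, hx⟩ ⟨y, hy⟩ ≤ q.length := dist_le q
  _ = G.dist x y := by rw [hq, hp]

lemma meshed_tc (hconn : G.Connected) (hm : Meshed G) : TriangleCondition G := by
  have key : ∀ j u v w, G.Adj v w → G.dist u v = G.dist u w → G.dist u v ≤ j →
      ∃ x : V, G.Adj v x ∧ G.Adj w x ∧ G.dist u x + 1 = G.dist u v := by
    intro j
    induction j with
    | zero =>
      intro u v w hadj heq hle
      have h1 : u = v := hconn.dist_eq_zero_iff.mp (by omega)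
      have h2 : u = w := hconn.dist_eq_zero_iff.mp (by omega)
      subst h1; subst h2
      exact absurd hadj G.irrefl
    | succ n ih =>
      intro u v w hadj heq hle
      by_cases hj : G.dist u v ≤ n
      · exact ih u v w hadj heq hj
      have hdv : G.dist u v = n + 1 := by omega
      have hdw : G.dist u w = n + 1 := by omega
      rcases Nat.eq_zero_or_pos n with hn0 | hn
      · subst hn0
        refine ⟨u, (dist_eq_one_iff_adj.mp (by omega)).symm,
          (dist_eq_one_iff_adj.mp (by omega)).symm, by simp [hdv, SimpleGraph.dist_self]⟩
      have huw : u ≠ w := by rintro rfl; rw [SimpleGraph.dist_self] at hdw; omega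
      obtain ⟨s, hsw, hds⟩ := exists_adj_near hconn huw
      have hds' : G.dist u s = n := by omega
      by_cases hsv : G.Adj s v
      · exact ⟨s, hsv.symm, hsw.symm, by omega⟩
      have hsvne : s ≠ v := by rintro rfl; omega
      have hsv2 : G.dist s v = 2 := by
        apply dist_two_of hconn hsvne hsv
        calc G.dist s v ≤ G.dist s w + 1 := adj_dist_le hconn hadj.symm s
        _ = 2 := by rw [dist_eq_one_iff_adj.mpr hsw]
      obtain ⟨t, hst, hvt, htd⟩ := hm u s v hsv2
      have hdt : G.dist u t = n := by
        have h1 : G.dist u v ≤ G.dist u t + 1 := adj_dist_le hconn hvt.symm u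
        omega
      obtain ⟨r, hsr, htr, hdr⟩ := ih u s t hst (by omega) (by omega)
      have hdr' : G.dist u r = n - 1 := by omega
      have hrv2 : G.dist r v = 2 := by
        have h1 : G.dist r v ≤ G.dist r t + 1 := adj_dist_le hconn hvt.symm r
        have h2 : G.dist r t = 1 := dist_eq_one_iff_adj.mpr htr.symm
        have h3 : G.dist u v ≤ G.dist u r + G.dist r v := hconn.dist_triangle
        omega
      have hrw2 : G.dist r w = 2 := by
        have h1 : G.dist r w ≤ G.dist r s + 1 := adj_dist_le hconn hsw r
        have h2 : G.dist r s = 1 := dist_eq_one_iff_adj.mpr hsr.symm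
        have h3 : G.dist u w ≤ G.dist u r + G.dist r w := hconn.dist_triangle
        omega
      obtain ⟨q, hrq, hwq, hqd⟩ := hm v r w hrw2
      have hdvw : G.dist v w = 1 := dist_eq_one_iff_adj.mpr hadj
      have hdvr : G.dist v r = 2 := by rw [SimpleGraph.dist_comm]; exact hrv2
      have hqv : G.dist v q ≤ 1 := by omega
      have hqvne : v ≠ q := by
        rintro rfl
        have := dist_eq_one_iff_adj.mpr hrq
        rw [SimpleGraph.dist_comm] at this
        omega
      have hqv1 : G.dist v q = 1 := by
        have h0 : G.dist v q ≠ 0 := fun h => hqvne (hconn.dist_eq_zero_iff.mp h)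
        omega
      have hadjvq : G.Adj v q := dist_eq_one_iff_adj.mp hqv1
      have hdq : G.dist u q = n := by
        have h1 : G.dist u q ≤ G.dist u r + 1 := adj_dist_le hconn hrq u
        have h2 : G.dist u v ≤ G.dist u q + 1 := adj_dist_le hconn hadjvq.symm u
        omega
      exact ⟨q, hadjvq, hwq, by omega⟩
  intro u v w hadj heq
  exact key (G.dist u v) u v w hadj heq le_rfl

lemma lemW (hconn : G.Connected) (hm : Meshed G) (htc : TriangleCondition G) {A : Set V}
    (hlc : ∀ a ∈ A, ∀ b ∈ A, G.dist a b = 2 → interval G a b ⊆ A)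
    {x y w' w : V} {k : ℕ} (hk : 2 ≤ k) (hx : x ∈ A) (hy : y ∈ A) (hw' : w' ∈ A)
    (haw' : G.Adj w' y) (haw : G.Adj w y)
    (hdy : G.dist x y = k) (hdw' : G.dist x w' = k - 1) (hdw : G.dist x w = k - 1)
    (hIw' : interval G x w' ⊆ A)
    (hiv : ∀ r q, r ∈ interval G x w' → G.dist x r = k - 2 → q ∈ A → G.Adj r q →
      G.dist x q = k - 1 → interval G x q ⊆ A) :
    ∃ v, v ∈ A ∧ G.Adj v w ∧ G.dist x v = k - 2 ∧ interval G x v ⊆ A := by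
  have hdw'y : G.dist w' y = 1 := dist_eq_one_iff_adj.mpr haw'
  have hdwy : G.dist w y = 1 := dist_eq_one_iff_adj.mpr haw
  by_cases hk2 : k = 2
  · subst hk2
    have : G.Adj x w := dist_eq_one_iff_adj.mp hdw
    exact ⟨x, hx, this, by simp [SimpleGraph.dist_self],
      (interval_self hconn x).trans (by simpa using hx)⟩
  have hk3 : 3 ≤ k := by omega
  by_cases hww' : w = w'
  · subst hww'
    have hne : x ≠ w := by rintro rfl; rw [SimpleGraph.dist_self] at hdw; omega
    obtain ⟨v, hvw, hdv⟩ := exists_adj_near hconn hne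
    have hvI : v ∈ interval G x w := by
      rw [mem_interval, dist_eq_one_iff_adj.mpr hvw]; omega
    exact ⟨v, hIw' hvI, hvw, by omega, (interval_mono hconn hvI).trans hIw'⟩
  by_cases haww' : G.Adj w w'
  · obtain ⟨t, hwt, hw't, hdt⟩ := htc x w w' haww' (by omega)
    have htI : t ∈ interval G x w' := by
      rw [mem_interval, dist_eq_one_iff_adj.mpr hw't.symm]; omega
    exact ⟨t, hIw' htI, hwt.symm, by omega, (interval_mono hconn htI).trans hIw'⟩
  have hdww' : G.dist w w' = 2 := by
    apply dist_two_of hconn hww' haww'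
    calc G.dist w w' ≤ G.dist w y + 1 := adj_dist_le hconn haw'.symm w
    _ = 2 := by rw [hdwy]
  obtain ⟨s, hws, hw's, hsd⟩ := hm x w w' hdww'
  have hds_le : G.dist x s ≤ k - 1 := by omega
  have hds_ge : k - 2 ≤ G.dist x s := by
    have h1 : G.dist x w ≤ G.dist x s + 1 := adj_dist_le hconn hws.symm x
    omega
  by_cases hs2 : G.dist x s = k - 2
  · have hsI : s ∈ interval G x w' := by
      rw [mem_interval, dist_eq_one_iff_adj.mpr hw's.symm]; omega
    exact ⟨s, hIw' hsI, hws.symm, hs2, (interval_mono hconn hsI).trans hIw'⟩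
  have hs1 : G.dist x s = k - 1 := by omega
  obtain ⟨r, hsr, hw'r, hdr⟩ := htc x s w' hw's.symm (by omega)
  have hdr' : G.dist x r = k - 2 := by omega
  have hrI : r ∈ interval G x w' := by
    rw [mem_interval, dist_eq_one_iff_adj.mpr hw'r.symm]; omega
  have hrA : r ∈ A := hIw' hrI
  have hIr : interval G x r ⊆ A := (interval_mono hconn hrI).trans hIw'
  by_cases harw : G.Adj r w
  · exact ⟨r, hrA, harw, hdr', hIr⟩
  have hrw2 : G.dist r w = 2 := by
    apply dist_two_of hconn ?_ harw
    · calc G.dist r w ≤ G.dist r s + 1 := adj_dist_le hconn hws.symm r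
      _ = 2 := by rw [dist_eq_one_iff_adj.mpr hsr.symm]
    · rintro rfl; omega
  have hry2 : G.dist r y = 2 := by
    have h1 : G.dist r y ≤ G.dist r w' + 1 := adj_dist_le hconn haw' r
    have h2 : G.dist r w' = 1 := dist_eq_one_iff_adj.mpr hw'r.symm
    have h3 : G.dist x y ≤ G.dist x r + G.dist r y := hconn.dist_triangle
    omega
  obtain ⟨q, hrq, hwq, hqd⟩ := hm y r w hrw2
  have hdyr : G.dist y r = 2 := by rw [SimpleGraph.dist_comm]; exact hry2
  have hdyw : G.dist y w = 1 := by rw [SimpleGraph.dist_comm]; exact hdwy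
  have hyq : y ≠ q := by
    rintro rfl
    have := dist_eq_one_iff_adj.mpr hrq
    rw [SimpleGraph.dist_comm] at this
    omega
  have hdyq : G.dist y q = 1 := by
    have h0 : G.dist y q ≠ 0 := fun h => hyq (hconn.dist_eq_zero_iff.mp h)
    omega
  have hqI : q ∈ interval G r y := by
    rw [mem_interval, dist_eq_one_iff_adj.mpr hrq,
      SimpleGraph.dist_comm (u := q) (v := y), hdyq]
    omega
  have hqA : q ∈ A := hlc r hrA y hy hry2 hqI
  have hdq : G.dist x q = k - 1 := by
    have h1 : G.dist x q ≤ G.dist x r + 1 := adj_dist_le hconn hrq x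
    have h2 : G.dist x y ≤ G.dist x q + G.dist q y := hconn.dist_triangle
    have h3 : G.dist q y = 1 := by rw [SimpleGraph.dist_comm]; exact hdyq
    omega
  have hIq : interval G x q ⊆ A := hiv r q hrI hdr' hqA hrq hdq
  obtain ⟨t, hwt, hqt, hdt⟩ := htc x w q hwq (by omega)
  have htI : t ∈ interval G x q := by
    rw [mem_interval, dist_eq_one_iff_adj.mpr hqt.symm]; omega
  exact ⟨t, hIq htI, hwt.symm, by omega, (interval_mono hconn htI).trans hIq⟩

end Stmt17Aux

open Stmt17Aux

/-- A connected induced subgraph of a meshed graph is convex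
if and only if it is locally-convex. -/
theorem stmt17 {V : Type*} [Fintype V] (G : SimpleGraph V) (hconn : G.Connected)
    (hm : Meshed G) (A : Set V) (hA : (G.induce A).Connected) :
    IsConvex G A ↔
      ∀ x ∈ A, ∀ y ∈ A, G.dist x y = 2 → interval G x y ⊆ A := by classical
  constructor
  · intro hconv x hxA y hyA _
    exact hconv x hxA y hyA
  · intro hlc
    have htc : TriangleCondition G := meshed_tc hconn hm
    have key : ∀ m : ℕ, ∀ x y : V, ∀ hx : x ∈ A, ∀ hy : y ∈ A,
        (G.induce A).dist ⟨x, hx⟩ ⟨y, hy⟩ = m →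
        G.dist x y = m ∧ interval G x y ⊆ A := by
      intro m
      induction m using Nat.strong_induction_on with
      | _ m ih =>
      intro x y hx hy hdA
      rcases Nat.eq_zero_or_pos m with rfl | hm1
      · have hxy : x = y := by
          have h := hA.dist_eq_zero_iff.mp hdA
          exact congrArg Subtype.val h
        subst hxy
        refine ⟨by simp [SimpleGraph.dist_self], (interval_self hconn x).trans ?_⟩
        intro z hz; rw [Set.mem_singleton_iff] at hz; subst hz; exact hx
      have hxyne : x ≠ y := by
        rintro rfl
        have h : (⟨x, hx⟩ : A) = ⟨x, hy⟩ := Subtype.ext rfl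
        rw [h, SimpleGraph.dist_self] at hdA
        omega
      have hne : (⟨x, hx⟩ : A) ≠ ⟨y, hy⟩ := fun h => hxyne (congrArg Subtype.val h)
      obtain ⟨w1, hw1adj, hw1d⟩ := exists_adj_near hA hne
      have hy1A : (w1 : V) ∈ A := w1.2
      have hadj_y1y : G.Adj (w1 : V) y := hw1adj
      have hdA_y1 : (G.induce A).dist ⟨x, hx⟩ ⟨(w1 : V), hy1A⟩ = m - 1 := by
        have h' : (G.induce A).dist ⟨x, hx⟩ ⟨(w1 : V), hy1A⟩ + 1 = m := by
          rw [hdA] at hw1d; exact hw1d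
        omega
      obtain ⟨hdy1, hIy1⟩ := ih (m - 1) (by omega) x (w1 : V) hx hy1A hdA_y1
      have hd_le : G.dist x y ≤ m := by
        have h1 : G.dist x y ≤ G.dist x (w1 : V) + 1 := adj_dist_le hconn hadj_y1y x
        omega
      have hd_pos : 0 < G.dist x y := hconn.pos_dist_of_ne hxyne
      have hd_ge : m - 1 ≤ G.dist x y + 1 := by
        have h1 : G.dist x (w1 : V) ≤ G.dist x y + 1 := adj_dist_le hconn hadj_y1y.symm x
        omega
      have hdyy1 : G.dist y (w1 : V) = 1 := dist_eq_one_iff_adj.mpr hadj_y1y.symm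
      -- rule out G.dist x y = m - 2
      have hbad1 : G.dist x y ≠ m - 2 ∨ m < 2 := by
        by_cases hm2 : 2 ≤ m
        · left
          intro hd
          have hyI : y ∈ interval G x (w1 : V) := by
            rw [mem_interval, hdyy1]; omega
          have hsub : interval G x y ⊆ A := (interval_mono hconn hyI).trans hIy1
          have hle := dA_le_of_interval hconn hx hy hsub
          omega
        · right; omega
      -- rule out G.dist x y = m - 1
      have hbad2 : G.dist x y ≠ m - 1 ∨ m < 2 := by
        by_cases hm2 : 2 ≤ m
        · left
          intro hd
          obtain ⟨t, hyt, hy1t, hdt⟩ := htc x y (w1 : V) hadj_y1y.symm (by omega)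
          have hdt' : G.dist x t = m - 2 := by omega
          have htI : t ∈ interval G x (w1 : V) := by
            rw [mem_interval, dist_eq_one_iff_adj.mpr hy1t.symm]; omega
          have htA : t ∈ A := hIy1 htI
          have hIt : interval G x t ⊆ A := (interval_mono hconn htI).trans hIy1
          have h1 : (G.induce A).dist ⟨x, hx⟩ ⟨t, htA⟩ ≤ m - 2 := by
            have := dA_le_of_interval hconn hx htA hIt
            omega
          have h2 : (G.induce A).dist ⟨x, hx⟩ ⟨y, hy⟩ ≤
              (G.induce A).dist ⟨x, hx⟩ ⟨t, htA⟩ + 1 := by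
            have hadjA : (G.induce A).Adj ⟨t, htA⟩ ⟨y, hy⟩ := by exact hyt.symm
            exact adj_dist_le hA hadjA ⟨x, hx⟩
          omega
        · right; omega
      have hdxy : G.dist x y = m := by
        rcases hbad1 with h1 | h1 <;> rcases hbad2 with h2 | h2 <;> omega
      refine ⟨hdxy, ?_⟩
      rcases Nat.lt_or_ge m 2 with hm2 | hm2
      · -- m = 1
        intro z hz
        rw [mem_interval, hdxy] at hz
        have hm1' : m = 1 := by omega
        rcases Nat.eq_zero_or_pos (G.dist x z) with h0 | h0
        · have : x = z := hconn.dist_eq_zero_iff.mp h0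
          subst this; exact hx
        · have : G.dist z y = 0 := by omega
          have : z = y := hconn.dist_eq_zero_iff.mp this
          subst this; exact hy
      -- m ≥ 2
      have hdy1' : G.dist x (w1 : V) = m - 1 := hdy1
      have hW : ∀ w : V, G.Adj w y → G.dist x w = m - 1 → w ∈ A ∧ interval G x w ⊆ A := by
        intro w hawy hdxw
        have hiv : ∀ r q, r ∈ interval G x (w1 : V) → G.dist x r = m - 2 → q ∈ A →
            G.Adj r q → G.dist x q = m - 1 → interval G x q ⊆ A := by
          intro r q hrI hdr hqA hrq hdq
          have hrA : r ∈ A := hIy1 hrI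
          have hIr : interval G x r ⊆ A := (interval_mono hconn hrI).trans hIy1
          have h1 : (G.induce A).dist ⟨x, hx⟩ ⟨r, hrA⟩ ≤ m - 2 := by
            have := dA_le_of_interval hconn hx hrA hIr
            omega
          have h2 : (G.induce A).dist ⟨x, hx⟩ ⟨q, hqA⟩ ≤ m - 1 := by
            have hadjA : (G.induce A).Adj ⟨r, hrA⟩ ⟨q, hqA⟩ := by exact hrq
            have := adj_dist_le hA hadjA ⟨x, hx⟩
            omega
          have h3 : m - 1 ≤ (G.induce A).dist ⟨x, hx⟩ ⟨q, hqA⟩ := by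
            have := induce_dist_ge hA hx hqA
            omega
          exact (ih (m - 1) (by omega) x q hx hqA (by omega)).2
        obtain ⟨v, hvA, hvw, hdv, hIv⟩ := lemW hconn hm htc hlc hm2 hx hy hy1A
          hadj_y1y hawy hdxy hdy1' hdxw hIy1 hiv
        have hdvw : G.dist v w = 1 := dist_eq_one_iff_adj.mpr hvw
        have hdwy' : G.dist w y = 1 := dist_eq_one_iff_adj.mpr hawy
        have hdvy : G.dist v y = 2 := by
          have h1 : G.dist v y ≤ G.dist v w + 1 := adj_dist_le hconn hawy v
          have h2 : G.dist x y ≤ G.dist x v + G.dist v y := hconn.dist_triangle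
          omega
        have hwA : w ∈ A := by
          apply hlc v hvA y hy hdvy
          rw [mem_interval, hdvw, hdwy', hdvy]
        have hdAw : (G.induce A).dist ⟨x, hx⟩ ⟨w, hwA⟩ = m - 1 := by
          have h1 : (G.induce A).dist ⟨x, hx⟩ ⟨v, hvA⟩ ≤ m - 2 := by
            have := dA_le_of_interval hconn hx hvA hIv
            omega
          have h2 : (G.induce A).dist ⟨x, hx⟩ ⟨w, hwA⟩ ≤
              (G.induce A).dist ⟨x, hx⟩ ⟨v, hvA⟩ + 1 := by
            have hadjA : (G.induce A).Adj ⟨v, hvA⟩ ⟨w, hwA⟩ := by exact hvw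
            exact adj_dist_le hA hadjA ⟨x, hx⟩
          have h3 : m - 1 ≤ (G.induce A).dist ⟨x, hx⟩ ⟨w, hwA⟩ := by
            have := induce_dist_ge hA hx hwA
            omega
          omega
        exact ⟨hwA, (ih (m - 1) (by omega) x w hx hwA hdAw).2⟩
      intro z hz
      have hz' : G.dist x z + G.dist z y = m := by rw [← hdxy]; exact hz
      by_cases hzy : z = y
      · subst hzy; exact hy
      obtain ⟨w, hwy, hdzw⟩ := exists_adj_near hconn hzy
      have hdxw : G.dist x w = m - 1 := by
        have h1 : G.dist x w ≤ G.dist x z + G.dist z w := hconn.dist_triangle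
        have h2 : G.dist x y ≤ G.dist x w + 1 := adj_dist_le hconn hwy x
        have hzy_pos : 0 < G.dist z y := hconn.pos_dist_of_ne hzy
        omega
      obtain ⟨hwA, hIw⟩ := hW w hwy hdxw
      apply hIw
      rw [mem_interval]
      have hzy_pos : 0 < G.dist z y := hconn.pos_dist_of_ne hzy
      omega
    intro u hu v hv
    exact (key ((G.induce A).dist ⟨u, hu⟩ ⟨v, hv⟩) u v hu hv rfl).2
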